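/- arXiv:2206.02091 — 6 statements merged into one kernel-verified Lean document; each statement's English description precedes it below -/
import Mathlib

section
/- (Lemma 1, level-set invariance.) Let {R_k} be a WANBB trajectory with parameters μ_k ∈ [0,1] satisfying the sufficient-decrease condition E_{k+1} ≤ B_k − c·α_k·‖F_k‖_F² for all k, where c > 0 and α_k > 0. Then every iterate remains in the level set: E_k ≤ E_0 for all k ≥ 0, i.e., {R_k} ⊆ L := {R ∈ V : E(R) ≤ E_0}. -/
open scoped RealInnerProductSpace

/-- Lemma 1 (level-set invariance): under the sufficient-decrease condition,
every WANBB iterate stays in the level set `{R | E R ≤ E (R 0)}`. -/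
theorem wanbb_level_set_invariance
    {V : Type*} [NormedAddCommGroup V] [InnerProductSpace ℝ V] [CompleteSpace V]
    (E : V → ℝ) (hE : Differentiable ℝ E)
    (F : V → V) (hF : ∀ x, F x = -gradient E x)
    (R : ℕ → V) (α μ B Q : ℕ → ℝ) (c : ℝ) (hc : 0 < c)
    (hα : ∀ k, 0 < α k)
    (hstep : ∀ k, R (k + 1) = R k + α k • F (R k))
    (hμ : ∀ k, μ k ∈ Set.Icc (0 : ℝ) 1)
    (hB0 : B 0 = E (R 0)) (hQ0 : Q 0 = 1)
    (hBrec : ∀ k, B (k + 1) = (B k + μ k * Q k * E (R (k + 1))) / (1 + μ k * Q k))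
    (hQrec : ∀ k, Q (k + 1) = 1 + μ k * Q k)
    (hdec : ∀ k, E (R (k + 1)) ≤ B k - c * α k * ‖F (R k)‖ ^ 2) :
    ∀ k, R k ∈ {x : V | E x ≤ E (R 0)} := by
  -- key invariant: Q k ≥ 0 and B k ≤ E (R 0)
  have key : ∀ k, 0 ≤ Q k ∧ B k ≤ E (R 0) := by
    intro k
    induction k with
    | zero => exact ⟨by rw [hQ0]; norm_num, le_of_eq hB0⟩
    | succ n ih =>
      obtain ⟨hQn, hBn⟩ := ih
      obtain ⟨hμ0, hμ1⟩ := hμ n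
      have hμQ : 0 ≤ μ n * Q n := mul_nonneg hμ0 hQn
      have hpos : 0 < 1 + μ n * Q n := by linarith
      have hEle : E (R (n + 1)) ≤ B n := by
        have := hdec n
        have h2 : 0 ≤ c * α n * ‖F (R n)‖ ^ 2 :=
          mul_nonneg (mul_nonneg hc.le (hα n).le) (sq_nonneg _)
        linarith
      constructor
      · rw [hQrec n]; linarith
      · rw [hBrec n]
        rw [div_le_iff₀ hpos]
        have : μ n * Q n * E (R (n + 1)) ≤ μ n * Q n * B n :=
          mul_le_mul_of_nonneg_left hEle hμQ
        nlinarith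
  intro k
  simp only [Set.mem_setOf_eq]
  cases k with
  | zero => exact le_refl _
  | succ n =>
    have hEle : E (R (n + 1)) ≤ B n := by
      have := hdec n
      have h2 : 0 ≤ c * α n * ‖F (R n)‖ ^ 2 :=
        mul_nonneg (mul_nonneg hc.le (hα n).le) (sq_nonneg _)
      linarith
    exact le_trans hEle (key n).2
end

section
/- (Stepsize lower bound.) Let {R_k} be a WANBB trajectory satisfying both the sufficient-decrease condition E_{k+1} ≤ B_k − c·α_k·‖F_k‖_F² and the curvature condition ⟨F_{k+1}, F_k⟩ ≤ σ‖F_k‖_F² for all k, where c > 0 and σ ∈ (0,1). Suppose F is Lipschitz continuous with modulus L > 0 on the level set L := {R ∈ V : E(R) ≤ E_0}, i.e., ‖F(R) − F(R̄)‖_F ≤ L‖R − R̄‖_F for all R, R̄ ∈ L. Then for every k with F_k ≠ 0 the stepsize satisfies α_k ≥ (1 − σ)/L. -/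
open scoped RealInnerProductSpace

/-!
`B (k + 1)` is a weighted average of `B k` and `E (R (k + 1)) ≤ B k`, so `B` is nonincreasing and
every iterate stays in the level set, where `F` is Lipschitz. The curvature condition then gives
`(1 - σ) ‖F_k‖² ≤ ⟪F_k - F_{k+1}, F_k⟫ ≤ L ‖R_{k+1} - R_k‖ ‖F_k‖ = L α_k ‖F_k‖²`.
-/

section MonitoringSequence

variable {B e w : ℕ → ℝ}

theorem weighted_average_le {b x t : ℝ} (ht : 0 ≤ t) (hx : x ≤ b) :
    (b + t * x) / (1 + t) ≤ b := by
  rw [div_le_iff₀ (by linarith)]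
  nlinarith

theorem antitone_of_le_weighted_average (hw : ∀ k, 0 ≤ w k) (he : ∀ k, e (k + 1) ≤ B k)
    (hB : ∀ k, B (k + 1) = (B k + w k * e (k + 1)) / (1 + w k)) : Antitone B :=
  antitone_nat_of_succ_le fun k => (hB k).trans_le (weighted_average_le (hw k) (he k))

theorem le_initial_of_le_weighted_average (hw : ∀ k, 0 ≤ w k) (he : ∀ k, e (k + 1) ≤ B k)
    (hB : ∀ k, B (k + 1) = (B k + w k * e (k + 1)) / (1 + w k)) (h0 : B 0 = e 0) :
    ∀ k, e k ≤ e 0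
  | 0 => le_rfl
  | k + 1 => (he k).trans <| h0 ▸ antitone_of_le_weighted_average hw he hB (Nat.zero_le k)

end MonitoringSequence

theorem nonneg_of_eq_one_add_mul {μ Q : ℕ → ℝ} (hμ : ∀ k, 0 ≤ μ k) (hQ0 : Q 0 = 1)
    (hQ : ∀ k, Q (k + 1) = 1 + μ k * Q k) : ∀ k, 0 ≤ Q k
  | 0 => hQ0 ▸ zero_le_one
  | k + 1 => by
    have := mul_nonneg (hμ k) (nonneg_of_eq_one_add_mul hμ hQ0 hQ k)
    rw [hQ]
    positivity

theorem div_le_of_inner_le_of_norm_sub_le {V : Type*} [NormedAddCommGroup V]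
    [InnerProductSpace ℝ V] {g g' : V} {α σ L : ℝ} (hL : 0 < L) (hg : g ≠ 0)
    (hcurv : ⟪g', g⟫ ≤ σ * ‖g‖ ^ 2) (hLip : ‖g - g'‖ ≤ L * (α * ‖g‖)) :
    (1 - σ) / L ≤ α := by
  have hg2 : 0 < ‖g‖ ^ 2 := by positivity
  have : (1 - σ) * ‖g‖ ^ 2 ≤ L * α * ‖g‖ ^ 2 :=
    calc (1 - σ) * ‖g‖ ^ 2 ≤ ⟪g - g', g⟫ := by
          rw [inner_sub_left, real_inner_self_eq_norm_sq]; linarith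
      _ ≤ ‖g - g'‖ * ‖g‖ := real_inner_le_norm _ _
      _ ≤ L * (α * ‖g‖) * ‖g‖ := by gcongr
      _ = L * α * ‖g‖ ^ 2 := by ring
  rw [div_le_iff₀ hL, mul_comm α]
  exact le_of_mul_le_mul_right this hg2

theorem wanbb_stepsize_lower_bound_general
    {V : Type*} [NormedAddCommGroup V] [InnerProductSpace ℝ V]
    (E : V → ℝ)
    (F : V → V)
    (R : ℕ → V) (α μ B Q : ℕ → ℝ) (c σ L : ℝ)
    (hc : 0 < c) (hL : 0 < L)
    (hα : ∀ k, 0 < α k)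
    (hstep : ∀ k, R (k + 1) = R k + α k • F (R k))
    (hμ : ∀ k, μ k ∈ Set.Icc (0 : ℝ) 1)
    (hB0 : B 0 = E (R 0)) (hQ0 : Q 0 = 1)
    (hBrec : ∀ k, B (k + 1) = (B k + μ k * Q k * E (R (k + 1))) / (1 + μ k * Q k))
    (hQrec : ∀ k, Q (k + 1) = 1 + μ k * Q k)
    (hdec : ∀ k, E (R (k + 1)) ≤ B k - c * α k * ‖F (R k)‖ ^ 2)
    (hcurv : ∀ k, ⟪F (R (k + 1)), F (R k)⟫ ≤ σ * ‖F (R k)‖ ^ 2)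
    (hLip : ∀ x ∈ {y : V | E y ≤ E (R 0)}, ∀ z ∈ {y : V | E y ≤ E (R 0)},
      ‖F x - F z‖ ≤ L * ‖x - z‖) :
    ∀ k, F (R k) ≠ 0 → (1 - σ) / L ≤ α k := by
  intro k hFk
  have hQ := nonneg_of_eq_one_add_mul (fun k => (hμ k).1) hQ0 hQrec
  have hE_le_B : ∀ k, E (R (k + 1)) ≤ B k := fun k => by
    have := hα k
    have : 0 ≤ c * α k * ‖F (R k)‖ ^ 2 := by positivity
    linarith [hdec k]
  have hlevel := le_initial_of_le_weighted_average (e := fun k => E (R k))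
    (fun k => mul_nonneg (hμ k).1 (hQ k)) hE_le_B hBrec hB0
  have hdisp : ‖R k - R (k + 1)‖ = α k * ‖F (R k)‖ := by
    rw [hstep, sub_add_cancel_left, norm_neg, norm_smul, Real.norm_of_nonneg (hα k).le]
  exact div_le_of_inner_le_of_norm_sub_le hL hFk (hcurv k)
    (hdisp ▸ hLip _ (hlevel k) _ (hlevel (k + 1)))

/-- Stepsize lower bound: under the sufficient-decrease and curvature conditions,
with `F` Lipschitz (modulus `L`) on the level set, every stepsize with nonzero
force satisfies `α k ≥ (1 - σ) / L`. -/
theorem wanbb_stepsize_lower_bound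
    {V : Type*} [NormedAddCommGroup V] [InnerProductSpace ℝ V] [CompleteSpace V]
    (E : V → ℝ) (hE : Differentiable ℝ E)
    (F : V → V) (hF : ∀ x, F x = -gradient E x)
    (R : ℕ → V) (α μ B Q : ℕ → ℝ) (c σ L : ℝ)
    (hc : 0 < c) (hσ : σ ∈ Set.Ioo (0 : ℝ) 1) (hL : 0 < L)
    (hα : ∀ k, 0 < α k)
    (hstep : ∀ k, R (k + 1) = R k + α k • F (R k))
    (hμ : ∀ k, μ k ∈ Set.Icc (0 : ℝ) 1)
    (hB0 : B 0 = E (R 0)) (hQ0 : Q 0 = 1)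
    (hBrec : ∀ k, B (k + 1) = (B k + μ k * Q k * E (R (k + 1))) / (1 + μ k * Q k))
    (hQrec : ∀ k, Q (k + 1) = 1 + μ k * Q k)
    (hdec : ∀ k, E (R (k + 1)) ≤ B k - c * α k * ‖F (R k)‖ ^ 2)
    (hcurv : ∀ k, ⟪F (R (k + 1)), F (R k)⟫ ≤ σ * ‖F (R k)‖ ^ 2)
    (hLip : ∀ x ∈ {y : V | E y ≤ E (R 0)}, ∀ z ∈ {y : V | E y ≤ E (R 0)},
      ‖F x - F z‖ ≤ L * ‖x - z‖) :
    ∀ k, F (R k) ≠ 0 → (1 - σ) / L ≤ α k :=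
  wanbb_stepsize_lower_bound_general E F R α μ B Q c σ L hc hL hα hstep hμ hB0 hQ0 hBrec hQrec hdec
    hcurv hLip
end

section
/- (Surrogate recursion.) Let {R_k} be a WANBB trajectory satisfying both the sufficient-decrease condition E_{k+1} ≤ B_k − c·α_k·‖F_k‖_F² and the curvature condition ⟨F_{k+1}, F_k⟩ ≤ σ‖F_k‖_F² for all k, with c > 0, σ ∈ (0,1), and suppose F is Lipschitz continuous with modulus L > 0 on the level set L := {R ∈ V : E(R) ≤ E_0}. Set β := c(1 − σ)/L. Then for every k ≥ 0, B_{k+1} ≤ B_k − β·(μ_k Q_k / Q_{k+1})·‖F_k‖_F². -/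
open scoped RealInnerProductSpace

/-- Surrogate recursion: under the sufficient-decrease and curvature conditions,
with `F` Lipschitz (modulus `L`) on the level set and `β := c (1 - σ) / L`, one
has `B (k+1) ≤ B k - β * (μ k * Q k / Q (k+1)) * ‖F (R k)‖ ^ 2` for every `k`. -/
theorem wanbb_surrogate_recursion
    {V : Type*} [NormedAddCommGroup V] [InnerProductSpace ℝ V] [CompleteSpace V]
    (E : V → ℝ) (hE : Differentiable ℝ E)
    (F : V → V) (hF : ∀ x, F x = -gradient E x)
    (R : ℕ → V) (α μ B Q : ℕ → ℝ) (c σ L β : ℝ)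
    (hc : 0 < c) (hσ : σ ∈ Set.Ioo (0 : ℝ) 1) (hL : 0 < L)
    (hβ : β = c * (1 - σ) / L)
    (hα : ∀ k, 0 < α k)
    (hstep : ∀ k, R (k + 1) = R k + α k • F (R k))
    (hμ : ∀ k, μ k ∈ Set.Icc (0 : ℝ) 1)
    (hB0 : B 0 = E (R 0)) (hQ0 : Q 0 = 1)
    (hBrec : ∀ k, B (k + 1) = (B k + μ k * Q k * E (R (k + 1))) / (1 + μ k * Q k))
    (hQrec : ∀ k, Q (k + 1) = 1 + μ k * Q k)
    (hdec : ∀ k, E (R (k + 1)) ≤ B k - c * α k * ‖F (R k)‖ ^ 2)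
    (hcurv : ∀ k, ⟪F (R (k + 1)), F (R k)⟫ ≤ σ * ‖F (R k)‖ ^ 2)
    (hLip : ∀ x ∈ {y : V | E y ≤ E (R 0)}, ∀ z ∈ {y : V | E y ≤ E (R 0)},
      ‖F x - F z‖ ≤ L * ‖x - z‖) :
    ∀ k, B (k + 1) ≤ B k - β * (μ k * Q k / Q (k + 1)) * ‖F (R k)‖ ^ 2 := by
  -- Q k ≥ 1 for all k
  have hQ1 : ∀ k, 1 ≤ Q k := by
    intro k
    induction k with
    | zero => simp [hQ0]
    | succ n ih =>
      rw [hQrec]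
      nlinarith [(hμ n).1]
  have hmQ : ∀ k, 0 ≤ μ k * Q k := fun k =>
    mul_nonneg (hμ k).1 (le_trans zero_le_one (hQ1 k))
  have hD : ∀ k, (0:ℝ) < 1 + μ k * Q k := fun k => by nlinarith [hmQ k]
  -- level set membership: B k ≤ E (R 0) and E (R k) ≤ E (R 0)
  have hBE : ∀ k, B k ≤ E (R 0) ∧ E (R k) ≤ E (R 0) := by
    intro k
    induction k with
    | zero => exact ⟨le_of_eq hB0, le_refl _⟩
    | succ n ih =>
      have hsq : (0:ℝ) ≤ c * α n * ‖F (R n)‖ ^ 2 :=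
        mul_nonneg (mul_nonneg hc.le (hα n).le) (sq_nonneg _)
      have hE' : E (R (n + 1)) ≤ B n := le_trans (hdec n) (by linarith)
      constructor
      · rw [hBrec]
        have h1 : B n + μ n * Q n * E (R (n + 1)) ≤ B n * (1 + μ n * Q n) := by
          nlinarith [hmQ n]
        calc (B n + μ n * Q n * E (R (n + 1))) / (1 + μ n * Q n)
            ≤ B n * (1 + μ n * Q n) / (1 + μ n * Q n) :=
              (div_le_div_iff_of_pos_right (hD n)).mpr h1
          _ = B n := mul_div_cancel_right₀ _ (hD n).ne'
          _ ≤ E (R 0) := ih.1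
      · exact le_trans hE' ih.1
  intro k
  have hs0 : (0:ℝ) ≤ ‖F (R k)‖ ^ 2 := sq_nonneg _
  -- key step-size bound: β * ‖F‖² ≤ c * α k * ‖F‖²
  have hkey : β * ‖F (R k)‖ ^ 2 ≤ c * α k * ‖F (R k)‖ ^ 2 := by
    rcases eq_or_ne (‖F (R k)‖) 0 with h0 | h0
    · simp [h0]
    · have hFpos : 0 < ‖F (R k)‖ := lt_of_le_of_ne (norm_nonneg _) (Ne.symm h0)
      have hself : ⟪F (R k), F (R k)⟫ = ‖F (R k)‖ ^ 2 := real_inner_self_eq_norm_sq _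
      have h2 : (1 - σ) * ‖F (R k)‖ ^ 2 ≤ ⟪F (R k) - F (R (k+1)), F (R k)⟫ := by
        rw [inner_sub_left, hself]
        have := hcurv k
        linarith
      have h3 : ⟪F (R k) - F (R (k+1)), F (R k)⟫
          ≤ ‖F (R k) - F (R (k+1))‖ * ‖F (R k)‖ := real_inner_le_norm _ _
      have h4 : ‖F (R (k+1)) - F (R k)‖ ≤ L * ‖R (k+1) - R k‖ :=
        hLip _ (hBE (k+1)).2 _ (hBE k).2
      have h5 : ‖R (k+1) - R k‖ = α k * ‖F (R k)‖ := by
        rw [hstep k, add_sub_cancel_left, norm_smul, Real.norm_eq_abs,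
          abs_of_pos (hα k)]
      have h6 : ‖F (R k) - F (R (k+1))‖ = ‖F (R (k+1)) - F (R k)‖ :=
        norm_sub_rev _ _
      have h7 : (1 - σ) * ‖F (R k)‖ ^ 2 ≤ L * (α k * ‖F (R k)‖) * ‖F (R k)‖ := by
        calc (1 - σ) * ‖F (R k)‖ ^ 2 ≤ ⟪F (R k) - F (R (k+1)), F (R k)⟫ := h2
          _ ≤ ‖F (R k) - F (R (k+1))‖ * ‖F (R k)‖ := h3
          _ ≤ L * ‖R (k+1) - R k‖ * ‖F (R k)‖ := by
              rw [h6]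
              exact mul_le_mul_of_nonneg_right h4 (norm_nonneg _)
          _ = L * (α k * ‖F (R k)‖) * ‖F (R k)‖ := by rw [h5]
      have h8 : 1 - σ ≤ L * α k := by
        have hspos : 0 < ‖F (R k)‖ ^ 2 := by positivity
        nlinarith [sq_abs (‖F (R k)‖)]
      rw [hβ, div_mul_eq_mul_div, div_le_iff₀ hL]
      nlinarith
  -- conclude
  rw [hBrec, hQrec]
  have hDpos : (0:ℝ) < 1 + μ k * Q k := hD k
  have h1 : B k + μ k * Q k * E (R (k+1))
      ≤ B k * (1 + μ k * Q k) - β * (μ k * Q k) * ‖F (R k)‖ ^ 2 := by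
    have hd := hdec k
    have hmE : μ k * Q k * E (R (k+1)) ≤ μ k * Q k * (B k - c * α k * ‖F (R k)‖ ^ 2) :=
      mul_le_mul_of_nonneg_left hd (hmQ k)
    have hms : μ k * Q k * (β * ‖F (R k)‖ ^ 2) ≤ μ k * Q k * (c * α k * ‖F (R k)‖ ^ 2) :=
      mul_le_mul_of_nonneg_left hkey (hmQ k)
    nlinarith
  calc (B k + μ k * Q k * E (R (k+1))) / (1 + μ k * Q k)
      ≤ (B k * (1 + μ k * Q k) - β * (μ k * Q k) * ‖F (R k)‖ ^ 2) / (1 + μ k * Q k) :=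
        (div_le_div_iff_of_pos_right hDpos).mpr h1
    _ = B k - β * (μ k * Q k / (1 + μ k * Q k)) * ‖F (R k)‖ ^ 2 := by
        field_simp
end

section
/- (Summability of weighted force norms.) Let {R_k} be a WANBB trajectory satisfying both the sufficient-decrease condition E_{k+1} ≤ B_k − c·α_k·‖F_k‖_F² and the curvature condition ⟨F_{k+1}, F_k⟩ ≤ σ‖F_k‖_F² for all k, with c > 0, σ ∈ (0,1), parameters μ_k ∈ [0,1]. Suppose E is bounded from below on the level set L := {R ∈ V : E(R) ≤ E_0} and F is Lipschitz continuous with modulus L > 0 on L. Set β := c(1 − σ)/L. Then the series Σ_{k=0}^∞ (μ_k Q_k / Q_{k+1})·‖F_k‖_F² converges, and its sum is at most (1/β)·(B_0 − inf_k B_k) < +∞. -/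
open scoped RealInnerProductSpace

/-- Summability of weighted force norms: under the sufficient-decrease and
curvature conditions, with `E` bounded below on the level set, `F` Lipschitz
(modulus `L`) there, and `β := c (1 - σ) / L`, the series
`Σ (μ k * Q k / Q (k+1)) * ‖F (R k)‖²` converges and its sum is at most
`(1/β) * (B 0 - ⨅ k, B k)`. -/
theorem wanbb_weighted_force_summable
    {V : Type*} [NormedAddCommGroup V] [InnerProductSpace ℝ V] [CompleteSpace V]
    (E : V → ℝ) (hE : Differentiable ℝ E)
    (F : V → V) (hF : ∀ x, F x = -gradient E x)
    (R : ℕ → V) (α μ B Q : ℕ → ℝ) (c σ L β : ℝ)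
    (hc : 0 < c) (hσ : σ ∈ Set.Ioo (0 : ℝ) 1) (hL : 0 < L)
    (hβ : β = c * (1 - σ) / L)
    (hα : ∀ k, 0 < α k)
    (hstep : ∀ k, R (k + 1) = R k + α k • F (R k))
    (hμ : ∀ k, μ k ∈ Set.Icc (0 : ℝ) 1)
    (hB0 : B 0 = E (R 0)) (hQ0 : Q 0 = 1)
    (hBrec : ∀ k, B (k + 1) = (B k + μ k * Q k * E (R (k + 1))) / (1 + μ k * Q k))
    (hQrec : ∀ k, Q (k + 1) = 1 + μ k * Q k)
    (hdec : ∀ k, E (R (k + 1)) ≤ B k - c * α k * ‖F (R k)‖ ^ 2)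
    (hcurv : ∀ k, ⟪F (R (k + 1)), F (R k)⟫ ≤ σ * ‖F (R k)‖ ^ 2)
    (hbdd : BddBelow (E '' {y : V | E y ≤ E (R 0)}))
    (hLip : ∀ x ∈ {y : V | E y ≤ E (R 0)}, ∀ z ∈ {y : V | E y ≤ E (R 0)},
      ‖F x - F z‖ ≤ L * ‖x - z‖) :
    Summable (fun k => (μ k * Q k / Q (k + 1)) * ‖F (R k)‖ ^ 2) ∧
    (∑' k, (μ k * Q k / Q (k + 1)) * ‖F (R k)‖ ^ 2) ≤ (1 / β) * (B 0 - ⨅ k, B k) := by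
  obtain ⟨hσ0, hσ1⟩ := hσ
  have hβpos : 0 < β := by
    rw [hβ]; exact div_pos (mul_pos hc (by linarith)) hL
  have hQ1 : ∀ k, 1 ≤ Q k := by
    intro k
    induction k with
    | zero => simp [hQ0]
    | succ n ih =>
      rw [hQrec]
      have h := (hμ n).1
      nlinarith
  have hμQ : ∀ k, 0 ≤ μ k * Q k := fun k =>
    mul_nonneg (hμ k).1 (le_trans zero_le_one (hQ1 k))
  have hd : ∀ k, (0 : ℝ) < 1 + μ k * Q k := fun k => by nlinarith [hμQ k]
  have hnn : ∀ k, 0 ≤ c * α k * ‖F (R k)‖ ^ 2 := fun k =>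
    mul_nonneg (mul_nonneg hc.le (hα k).le) (sq_nonneg _)
  have hEB : ∀ k, E (R (k + 1)) ≤ B k := fun k => by
    have := hdec k; have := hnn k; linarith
  have hBmono : ∀ k, B (k + 1) ≤ B k := by
    intro k
    rw [hBrec, div_le_iff₀ (hd k)]
    have h1 := hEB k
    nlinarith [hμQ k]
  have hBle : ∀ k, B k ≤ E (R 0) := by
    intro k
    induction k with
    | zero => rw [hB0]
    | succ n ih => exact (hBmono n).trans ih
  have hlevel : ∀ k, E (R k) ≤ E (R 0) := by
    intro k
    cases k with
    | zero => exact le_rfl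
    | succ n => exact (hEB n).trans (hBle n)
  obtain ⟨m, hm⟩ := hbdd
  have hmE : ∀ k, m ≤ E (R k) := fun k => hm ⟨R k, hlevel k, rfl⟩
  have hmB : ∀ k, m ≤ B k := by
    intro k
    induction k with
    | zero => rw [hB0]; exact hmE 0
    | succ n ih =>
      rw [hBrec, le_div_iff₀ (hd n)]
      have h1 := hmE (n + 1)
      nlinarith [hμQ n]
  have hstepβ : ∀ k, β * ‖F (R k)‖ ^ 2 ≤ c * α k * ‖F (R k)‖ ^ 2 := by
    intro k
    by_cases hF0 : ‖F (R k)‖ = 0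
    · simp [hF0]
    · have hFpos : 0 < ‖F (R k)‖ := lt_of_le_of_ne (norm_nonneg _) (Ne.symm hF0)
      have hnormstep : ‖R (k + 1) - R k‖ = α k * ‖F (R k)‖ := by
        rw [hstep k]
        simp [norm_smul, abs_of_pos (hα k)]
      have hLk := hLip (R (k + 1)) (hlevel (k + 1)) (R k) (hlevel k)
      have hinner : (1 - σ) * ‖F (R k)‖ ^ 2 ≤ ⟪F (R k) - F (R (k + 1)), F (R k)⟫ := by
        rw [inner_sub_left, real_inner_self_eq_norm_sq]
        linarith [hcurv k]
      have hCS : ⟪F (R k) - F (R (k + 1)), F (R k)⟫ ≤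
          ‖F (R k) - F (R (k + 1))‖ * ‖F (R k)‖ := real_inner_le_norm _ _
      have h3 : ‖F (R k) - F (R (k + 1))‖ = ‖F (R (k + 1)) - F (R k)‖ := norm_sub_rev _ _
      have h5 : ‖F (R (k + 1)) - F (R k)‖ * ‖F (R k)‖ ≤
          L * (α k * ‖F (R k)‖) * ‖F (R k)‖ := by
        apply mul_le_mul_of_nonneg_right _ (norm_nonneg _)
        rw [← hnormstep]; exact hLk
      have h4 : (1 - σ) * ‖F (R k)‖ ^ 2 ≤ L * (α k * ‖F (R k)‖) * ‖F (R k)‖ := by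
        rw [h3] at hCS
        linarith
      have h6 := mul_le_mul_of_nonneg_left h4 hc.le
      rw [hβ, div_mul_eq_mul_div, div_le_iff₀ hL]
      nlinarith [h6]
  have hkey : ∀ k, β * ‖F (R k)‖ ^ 2 ≤ B k - E (R (k + 1)) := by
    intro k
    have := hdec k
    have := hstepβ k
    linarith
  have hper : ∀ k, β * ((μ k * Q k / Q (k + 1)) * ‖F (R k)‖ ^ 2) ≤ B k - B (k + 1) := by
    intro k
    rw [hBrec k, hQrec k]
    have heq : B k - (B k + μ k * Q k * E (R (k + 1))) / (1 + μ k * Q k)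
        = (μ k * Q k / (1 + μ k * Q k)) * (B k - E (R (k + 1))) := by
      have hne : (1 + μ k * Q k) ≠ 0 := (hd k).ne'
      field_simp
      ring
    rw [heq]
    have hre : β * ((μ k * Q k / (1 + μ k * Q k)) * ‖F (R k)‖ ^ 2)
        = (μ k * Q k / (1 + μ k * Q k)) * (β * ‖F (R k)‖ ^ 2) := by ring
    rw [hre]
    exact mul_le_mul_of_nonneg_left (hkey k) (div_nonneg (hμQ k) (hd k).le)
  have hfnn : ∀ k, 0 ≤ (μ k * Q k / Q (k + 1)) * ‖F (R k)‖ ^ 2 := by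
    intro k
    have : 0 ≤ μ k * Q k / Q (k + 1) := by
      apply div_nonneg (hμQ k)
      rw [hQrec]; exact (hd k).le
    positivity
  have hinfle : ∀ n, (⨅ k, B k) ≤ B n := fun n =>
    ciInf_le ⟨m, fun x ⟨k, hk⟩ => hk ▸ hmB k⟩ n
  have hsum : ∀ n, ∑ i ∈ Finset.range n,
      (μ i * Q i / Q (i + 1)) * ‖F (R i)‖ ^ 2 ≤ (1 / β) * (B 0 - ⨅ k, B k) := by
    intro n
    have h1 : β * ∑ i ∈ Finset.range n, (μ i * Q i / Q (i + 1)) * ‖F (R i)‖ ^ 2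
        ≤ B 0 - B n := by
      rw [Finset.mul_sum]
      calc ∑ i ∈ Finset.range n, β * ((μ i * Q i / Q (i + 1)) * ‖F (R i)‖ ^ 2)
          ≤ ∑ i ∈ Finset.range n, (B i - B (i + 1)) :=
            Finset.sum_le_sum (fun i _ => hper i)
        _ = B 0 - B n := Finset.sum_range_sub' B n
    have h2 : B 0 - B n ≤ B 0 - ⨅ k, B k := by linarith [hinfle n]
    rw [one_div_mul_eq_div, le_div_iff₀ hβpos]
    nlinarith
  exact ⟨summable_of_sum_range_le hfnn hsum, Real.tsum_le_of_sum_range_le hfnn hsum⟩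
end

section
/- (Force-norm square summability.) Let {R_k} be a WANBB trajectory satisfying both the sufficient-decrease condition E_{k+1} ≤ B_k − c·α_k·‖F_k‖_F² and the curvature condition ⟨F_{k+1}, F_k⟩ ≤ σ‖F_k‖_F² for all k, with c > 0, σ ∈ (0,1), and parameters μ_k ∈ [μ_min, μ_max] ⊆ (0,1]. Suppose E is bounded from below on the level set L := {R ∈ V : E(R) ≤ E_0} and F is Lipschitz continuous with modulus L > 0 on L. Then Σ_{k=0}^∞ ‖F_k‖_F² < +∞. -/
open scoped RealInnerProductSpace

/-- Force-norm square summability: under the sufficient-decrease and curvature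
conditions, with parameters `μ k ∈ [μmin, μmax] ⊆ (0,1]`, `E` bounded below on
the level set, and `F` Lipschitz (modulus `L`) there, one has
`Σ ‖F (R k)‖² < ∞`. -/
theorem wanbb_force_norm_sq_summable
    {V : Type*} [NormedAddCommGroup V] [InnerProductSpace ℝ V] [CompleteSpace V]
    (E : V → ℝ) (hE : Differentiable ℝ E)
    (F : V → V) (hF : ∀ x, F x = -gradient E x)
    (R : ℕ → V) (α μ B Q : ℕ → ℝ) (c σ L μmin μmax : ℝ)
    (hc : 0 < c) (hσ : σ ∈ Set.Ioo (0 : ℝ) 1) (hL : 0 < L)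
    (hμmin : 0 < μmin) (hminmax : μmin ≤ μmax) (hμmax : μmax ≤ 1)
    (hμ : ∀ k, μ k ∈ Set.Icc μmin μmax)
    (hα : ∀ k, 0 < α k)
    (hstep : ∀ k, R (k + 1) = R k + α k • F (R k))
    (hB0 : B 0 = E (R 0)) (hQ0 : Q 0 = 1)
    (hBrec : ∀ k, B (k + 1) = (B k + μ k * Q k * E (R (k + 1))) / (1 + μ k * Q k))
    (hQrec : ∀ k, Q (k + 1) = 1 + μ k * Q k)
    (hdec : ∀ k, E (R (k + 1)) ≤ B k - c * α k * ‖F (R k)‖ ^ 2)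
    (hcurv : ∀ k, ⟪F (R (k + 1)), F (R k)⟫ ≤ σ * ‖F (R k)‖ ^ 2)
    (hbdd : BddBelow (E '' {y : V | E y ≤ E (R 0)}))
    (hLip : ∀ x ∈ {y : V | E y ≤ E (R 0)}, ∀ z ∈ {y : V | E y ≤ E (R 0)},
      ‖F x - F z‖ ≤ L * ‖x - z‖) :
    Summable (fun k => ‖F (R k)‖ ^ 2) := by
  obtain ⟨m, hm⟩ := hbdd
  obtain ⟨hσ0, hσ1⟩ := hσ
  -- Q k ≥ 1
  have hQ : ∀ k, 1 ≤ Q k := by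
    intro k
    induction k with
    | zero => rw [hQ0]
    | succ k ih =>
      rw [hQrec]
      nlinarith [(hμ k).1]
  have hμQpos : ∀ k, 0 < μ k * Q k := fun k =>
    mul_pos (lt_of_lt_of_le hμmin (hμ k).1) (lt_of_lt_of_le one_pos (hQ k))
  have hμQmin : ∀ k, μmin ≤ μ k * Q k := by
    intro k
    nlinarith [(hμ k).1, hQ k, hμmin]
  have hterm_nonneg : ∀ k, 0 ≤ α k * ‖F (R k)‖ ^ 2 := fun k =>
    mul_nonneg (hα k).le (sq_nonneg _)
  -- E (R k) ≤ B k
  have hEB : ∀ k, E (R k) ≤ B k := by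
    intro k
    induction k with
    | zero => rw [hB0]
    | succ k ih =>
      have h1 : E (R (k + 1)) ≤ B k := by
        have := hdec k
        nlinarith [mul_nonneg hc.le (hterm_nonneg k)]
      have hq := hμQpos k
      rw [hBrec, le_div_iff₀ (by linarith : (0:ℝ) < 1 + μ k * Q k)]
      nlinarith
  set d := c * (μmin / (1 + μmin)) with hd
  have hdpos : 0 < d := by positivity
  -- B decreases
  have hBdec : ∀ k, B (k + 1) ≤ B k - d * (α k * ‖F (R k)‖ ^ 2) := by
    intro k
    have hq := hμQpos k
    have h1 : (0:ℝ) < 1 + μ k * Q k := by linarith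
    have key : d * (1 + μ k * Q k) ≤ c * (μ k * Q k) := by
      have h2 : (0:ℝ) < 1 + μmin := by linarith
      have hd' : d = c * μmin / (1 + μmin) := by rw [hd]; ring
      rw [hd', div_mul_eq_mul_div, div_le_iff₀ h2]
      nlinarith [mul_le_mul_of_nonneg_left (hμQmin k) hc.le]
    rw [hBrec, div_le_iff₀ h1]
    nlinarith [mul_le_mul_of_nonneg_left (hdec k) hq.le,
      mul_le_mul_of_nonneg_right key (hterm_nonneg k)]
  -- B bounded above by B 0
  have hBmono : ∀ k, B k ≤ B 0 := by
    intro k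
    induction k with
    | zero => exact le_refl _
    | succ k ih =>
      have := hBdec k
      nlinarith [hterm_nonneg k, hdpos]
  -- points stay in the level set, lower bound
  have hmem : ∀ k, R k ∈ {y : V | E y ≤ E (R 0)} := by
    intro k
    have := hEB k
    have := hBmono k
    simp only [Set.mem_setOf_eq]
    linarith [hB0 ▸ (le_trans (hEB k) (hBmono k))]
  have hmB : ∀ k, m ≤ B k := fun k =>
    le_trans (hm ⟨R k, hmem k, rfl⟩) (hEB k)
  -- telescoping bound on partial sums of α‖F‖²
  have hsum1 : ∀ n, ∑ i ∈ Finset.range n, d * (α i * ‖F (R i)‖ ^ 2) ≤ B 0 - m := by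
    intro n
    have : ∑ i ∈ Finset.range n, d * (α i * ‖F (R i)‖ ^ 2) ≤ B 0 - B n := by
      induction n with
      | zero => simp
      | succ n ih =>
        rw [Finset.sum_range_succ]
        have := hBdec n
        linarith
    linarith [hmB n]
  -- lower bound on α from curvature + Lipschitz
  have hαF : ∀ k, (1 - σ) * ‖F (R k)‖ ^ 2 ≤ L * (α k * ‖F (R k)‖ ^ 2) := by
    intro k
    have hLipk : ‖F (R k) - F (R (k + 1))‖ ≤ L * (α k * ‖F (R k)‖) := by
      have := hLip (R k) (hmem k) (R (k + 1)) (hmem (k + 1))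
      have hnorm : ‖R k - R (k + 1)‖ = α k * ‖F (R k)‖ := by
        rw [hstep k]
        simp [norm_smul, abs_of_pos (hα k)]
      rw [hnorm] at this
      exact this
    have hinner : (1 - σ) * ‖F (R k)‖ ^ 2 ≤ ⟪F (R k) - F (R (k + 1)), F (R k)⟫ := by
      rw [inner_sub_left, real_inner_self_eq_norm_sq]
      linarith [hcurv k]
    have hCS : ⟪F (R k) - F (R (k + 1)), F (R k)⟫ ≤
        ‖F (R k) - F (R (k + 1))‖ * ‖F (R k)‖ := real_inner_le_norm _ _
    have h2 : ‖F (R k) - F (R (k + 1))‖ * ‖F (R k)‖ ≤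
        (L * (α k * ‖F (R k)‖)) * ‖F (R k)‖ :=
      mul_le_mul_of_nonneg_right hLipk (norm_nonneg _)
    nlinarith [norm_nonneg (F (R k))]
  -- conclude summability
  apply summable_of_sum_range_le (c := L / ((1 - σ) * d) * (B 0 - m))
    (fun k => sq_nonneg _)
  intro n
  have h1σ : (0:ℝ) < 1 - σ := by linarith
  have hsum2 : ∀ i, ‖F (R i)‖ ^ 2 ≤ (L / (1 - σ)) * (α i * ‖F (R i)‖ ^ 2) := by
    intro i
    rw [div_mul_eq_mul_div, le_div_iff₀ h1σ]
    nlinarith [hαF i]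
  calc ∑ i ∈ Finset.range n, ‖F (R i)‖ ^ 2
      ≤ ∑ i ∈ Finset.range n, (L / (1 - σ)) * (α i * ‖F (R i)‖ ^ 2) :=
        Finset.sum_le_sum fun i _ => hsum2 i
    _ = (L / ((1 - σ) * d)) * ∑ i ∈ Finset.range n, d * (α i * ‖F (R i)‖ ^ 2) := by
        rw [Finset.mul_sum]
        apply Finset.sum_congr rfl
        intro i _
        field_simp
    _ ≤ L / ((1 - σ) * d) * (B 0 - m) := by
        apply mul_le_mul_of_nonneg_left (hsum1 n)
        positivity
end

section
/- (Theorem: global convergence of WANBB.) Let {R_k} be a WANBB trajectory satisfying both the sufficient-decrease condition E_{k+1} ≤ B_k − c·α_k·‖F_k‖_F² and the curvature condition ⟨F_{k+1}, F_k⟩ ≤ σ‖F_k‖_F² for all k, with c > 0, σ ∈ (0,1), and parameters μ_k ∈ [μ_min, μ_max] ⊆ (0,1]. Suppose the potential energy E is bounded from below on the level set L := {R ∈ V : E(R) ≤ E_0} and F is Lipschitz continuous with modulus L > 0 on L, i.e., ‖F(R) − F(R̄)‖_F ≤ L‖R − R̄‖_F for all R, R̄ ∈ L. Then lim_{k→∞}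 ‖F_k‖_F = 0; that is, the atoms approach equilibria regardless of the initial configuration. -/
open scoped RealInnerProductSpace

set_option maxHeartbeats 1000000 in
/-- Global convergence of WANBB: under the sufficient-decrease and curvature
conditions, with parameters `μ k ∈ [μmin, μmax] ⊆ (0,1]`, `E` bounded below on
the level set, and `F` Lipschitz (modulus `L`) there, the force norms tend to
zero: `‖F (R k)‖ → 0`. -/
theorem wanbb_global_convergence
    {V : Type*} [NormedAddCommGroup V] [InnerProductSpace ℝ V] [CompleteSpace V]
    (E : V → ℝ) (hE : Differentiable ℝ E)
    (F : V → V) (hF : ∀ x, F x = -gradient E x)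
    (R : ℕ → V) (α μ B Q : ℕ → ℝ) (c σ L μmin μmax : ℝ)
    (hc : 0 < c) (hσ : σ ∈ Set.Ioo (0 : ℝ) 1) (hL : 0 < L)
    (hμmin : 0 < μmin) (hminmax : μmin ≤ μmax) (hμmax : μmax ≤ 1)
    (hμ : ∀ k, μ k ∈ Set.Icc μmin μmax)
    (hα : ∀ k, 0 < α k)
    (hstep : ∀ k, R (k + 1) = R k + α k • F (R k))
    (hB0 : B 0 = E (R 0)) (hQ0 : Q 0 = 1)
    (hBrec : ∀ k, B (k + 1) = (B k + μ k * Q k * E (R (k + 1))) / (1 + μ k * Q k))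
    (hQrec : ∀ k, Q (k + 1) = 1 + μ k * Q k)
    (hdec : ∀ k, E (R (k + 1)) ≤ B k - c * α k * ‖F (R k)‖ ^ 2)
    (hcurv : ∀ k, ⟪F (R (k + 1)), F (R k)⟫ ≤ σ * ‖F (R k)‖ ^ 2)
    (hbdd : BddBelow (E '' {y : V | E y ≤ E (R 0)}))
    (hLip : ∀ x ∈ {y : V | E y ≤ E (R 0)}, ∀ z ∈ {y : V | E y ≤ E (R 0)},
      ‖F x - F z‖ ≤ L * ‖x - z‖) :
    Filter.Tendsto (fun k => ‖F (R k)‖) Filter.atTop (nhds 0) := by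
  obtain ⟨m, hm⟩ := hbdd
  obtain ⟨hσ0, hσ1⟩ := hσ
  have hQ1 : ∀ k, 1 ≤ Q k := by
    intro k; induction k with
    | zero => simp [hQ0]
    | succ n ih =>
      rw [hQrec]
      nlinarith [(hμ n).1]
  have hμQ : ∀ k, μmin ≤ μ k * Q k := by
    intro k; nlinarith [(hμ k).1, hQ1 k]
  have hEB : ∀ k, E (R (k + 1)) ≤ B k := by
    intro k
    nlinarith [hdec k, mul_nonneg (mul_nonneg hc.le (hα k).le) (sq_nonneg ‖F (R k)‖)]
  have hBmono : ∀ k, B (k + 1) ≤ B k := by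
    intro k
    rw [hBrec]
    have h1 : (0:ℝ) < 1 + μ k * Q k := by nlinarith [hμQ k]
    rw [div_le_iff₀ h1]
    nlinarith [hEB k, hμQ k]
  have hBle : ∀ k, B k ≤ E (R 0) := by
    intro k; induction k with
    | zero => simp [hB0]
    | succ n ih => exact (hBmono n).trans ih
  have hRL : ∀ k, E (R k) ≤ E (R 0) := by
    intro k
    cases k with
    | zero => exact le_rfl
    | succ n => exact (hEB n).trans (hBle n)
  have hmE : ∀ k, m ≤ E (R k) := fun k => hm ⟨R k, hRL k, rfl⟩
  have hmB : ∀ k, m ≤ B k := fun k => (hmE (k + 1)).trans (hEB k)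
  have h1σ : (0:ℝ) < 1 - σ := by linarith
  set A : ℝ := c * ((1 - σ) / L) with hAdef
  have hApos : 0 < A := by positivity
  set δ : ℝ := (μmin / (1 + μmin)) * A with hδdef
  have hδpos : 0 < δ := by positivity
  have key : ∀ k, δ * ‖F (R k)‖ ^ 2 ≤ B k - B (k + 1) := by
    intro k
    by_cases hz : ‖F (R k)‖ = 0
    · rw [hz]
      simpa using hBmono k
    · have hFpos : 0 < ‖F (R k)‖ := lt_of_le_of_ne (norm_nonneg _) (Ne.symm hz)
      have hLipk := hLip (R (k + 1)) (hRL (k + 1)) (R k) (hRL k)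
      have hdist : R (k + 1) - R k = α k • F (R k) := by rw [hstep k]; abel
      have hnorm : ‖R (k + 1) - R k‖ = α k * ‖F (R k)‖ := by
        rw [hdist, norm_smul, Real.norm_eq_abs, abs_of_pos (hα k)]
      have hinner : (1 - σ) * ‖F (R k)‖ ^ 2
          ≤ ‖F (R (k + 1)) - F (R k)‖ * ‖F (R k)‖ := by
        have h1 : (1 - σ) * ‖F (R k)‖ ^ 2 ≤ ⟪F (R k) - F (R (k + 1)), F (R k)⟫ := by
          rw [inner_sub_left, real_inner_self_eq_norm_sq]
          linarith [hcurv k]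
        calc (1 - σ) * ‖F (R k)‖ ^ 2 ≤ ⟪F (R k) - F (R (k + 1)), F (R k)⟫ := h1
          _ ≤ ‖F (R k) - F (R (k + 1))‖ * ‖F (R k)‖ := real_inner_le_norm _ _
          _ = ‖F (R (k + 1)) - F (R k)‖ * ‖F (R k)‖ := by rw [norm_sub_rev]
      have hchain : (1 - σ) * ‖F (R k)‖ ^ 2 ≤ L * α k * ‖F (R k)‖ ^ 2 := by
        calc (1 - σ) * ‖F (R k)‖ ^ 2 ≤ ‖F (R (k + 1)) - F (R k)‖ * ‖F (R k)‖ := hinner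
          _ ≤ (L * ‖R (k + 1) - R k‖) * ‖F (R k)‖ :=
              mul_le_mul_of_nonneg_right hLipk (norm_nonneg _)
          _ = L * α k * ‖F (R k)‖ ^ 2 := by rw [hnorm]; ring
      have hαlb : (1 - σ) / L ≤ α k := by
        rw [div_le_iff₀ hL]
        have hF2 : 0 < ‖F (R k)‖ ^ 2 := by positivity
        nlinarith [hchain, hF2]
      set t : ℝ := μ k * Q k with htdef
      have ht : μmin ≤ t := hμQ k
      have h1t : (0:ℝ) < 1 + t := by linarith
      have hA2 : A * ‖F (R k)‖ ^ 2 ≤ B k - E (R (k + 1)) := by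
        have h1 : A * ‖F (R k)‖ ^ 2 ≤ c * α k * ‖F (R k)‖ ^ 2 := by
          have := mul_le_mul_of_nonneg_left hαlb hc.le
          nlinarith [sq_nonneg ‖F (R k)‖]
        linarith [hdec k]
      have hgoal2 : δ * ‖F (R k)‖ ^ 2 * (1 + t) ≤ t * (B k - E (R (k + 1))) := by
        have hcoef : δ * (1 + t) ≤ A * t := by
          rw [hδdef, div_mul_eq_mul_div, div_mul_eq_mul_div, div_le_iff₀ (by linarith : (0:ℝ) < 1 + μmin)]
          nlinarith
        have h3 : δ * ‖F (R k)‖ ^ 2 * (1 + t) ≤ A * t * ‖F (R k)‖ ^ 2 := by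
          nlinarith [sq_nonneg ‖F (R k)‖]
        have h4 : A * t * ‖F (R k)‖ ^ 2 ≤ t * (B k - E (R (k + 1))) := by
          have htpos : (0:ℝ) < t := lt_of_lt_of_le hμmin ht
          nlinarith
        linarith
      rw [hBrec]
      have heq : B k - (B k + t * E (R (k + 1))) / (1 + t)
          = t * (B k - E (R (k + 1))) / (1 + t) := by
        field_simp; ring
      rw [heq, le_div_iff₀ h1t]
      linarith
  have hsum : ∀ n, ∑ k ∈ Finset.range n, δ * ‖F (R k)‖ ^ 2 ≤ E (R 0) - m := by
    intro n
    have h1 : ∑ k ∈ Finset.range n, δ * ‖F (R k)‖ ^ 2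
        ≤ ∑ k ∈ Finset.range n, (B k - B (k + 1)) :=
      Finset.sum_le_sum fun k _ => key k
    have htel : ∑ k ∈ Finset.range n, (B k - B (k + 1)) = B 0 - B n :=
      Finset.sum_range_sub' B n
    have := hmB n
    have := hBle 0
    linarith
  have hsummable : Summable (fun k => δ * ‖F (R k)‖ ^ 2) :=
    summable_of_sum_range_le (fun k => by positivity) hsum
  have h0 := hsummable.tendsto_atTop_zero
  have h2 : Filter.Tendsto (fun k => ‖F (R k)‖ ^ 2) Filter.atTop (nhds 0) := by
    have := h0.const_mul δ⁻¹
    simp only [mul_zero] at this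
    convert this using 2 with k
    rw [← mul_assoc, inv_mul_cancel₀ hδpos.ne', one_mul]
  have h3 : Filter.Tendsto (fun k => Real.sqrt (‖F (R k)‖ ^ 2)) Filter.atTop
      (nhds (Real.sqrt 0)) := (Real.continuous_sqrt.tendsto 0).comp h2
  simpa [Real.sqrt_sq (norm_nonneg _)] using h3
end
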